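/- Let X ∈ ℝ^{d×N}, ε > 0, and let X̃_p be any matrix of rank at most p with ‖X − X̃_p‖₂ ≤ (1+ε)σ_{p+1}(X). If (Ã, B̃) minimizes ‖X̃_p − X̃_p A B‖_F over column stochastic A ∈ ℝ^{N×k}, B ∈ ℝ^{k×N}, then (1/√N)‖X − XÃB̃‖_F ≤ opt(X) + 4(1+ε)σ_{p+1}(X). -/

import Mathlib

open Matrix

def ColStoch {m n : Type*} [Fintype m] [Fintype n] (M : Matrix m n ℝ) : Prop :=
  (∀ i j, 0 ≤ M i j) ∧ ∀ j, ∑ i, M i j = 1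

noncomputable def frob {m n : Type*} [Fintype m] [Fintype n] (M : Matrix m n ℝ) : ℝ :=
  Real.sqrt (∑ i, ∑ j, (M i j) ^ 2)

noncomputable def spec {m n : ℕ} (M : Matrix (Fin m) (Fin n) ℝ) : ℝ :=
  ‖LinearMap.toContinuousLinearMap (Matrix.toEuclideanLin M)‖

noncomputable def opt {d N : ℕ} (k : ℕ) (X : Matrix (Fin d) (Fin N) ℝ) : ℝ :=
  sInf {c | ∃ A : Matrix (Fin N) (Fin k) ℝ, ∃ B : Matrix (Fin k) (Fin N) ℝ,
    ColStoch A ∧ ColStoch B ∧ c = (1 / Real.sqrt N) * frob (X - X * A * B)}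

/-- `(p+1)`-st singular value, via Eckart–Young. -/
noncomputable def sigmaSucc {d N : ℕ} (p : ℕ) (X : Matrix (Fin d) (Fin N) ℝ) : ℝ :=
  sInf {c | ∃ Y : Matrix (Fin d) (Fin N) ℝ, Y.rank ≤ p ∧ c = spec (X - Y)}

/-! For column stochastic `S`, each column of `M * S` is `M` applied to a probability vector,
whose Euclidean norm is at most `1`; hence `‖M S‖_F ≤ √N ‖M‖₂`, and `M ↦ M - M S` is
`2√N`-Lipschitz from the spectral to the Frobenius norm. Replacing `X` by `X̃_p` therefore moves
every normalized objective value by at most `2‖X - X̃_p‖₂ ≤ 2(1+ε)σ_{p+1}(X)`: once at `(Ã, B̃)`,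
and once at an arbitrary competitor `(A, B)` for `opt(X)`, the two being linked by the minimality
of `(Ã, B̃)` for `X̃_p`. -/

open WithLp

section ColStoch

variable {m n l : Type*} [Fintype m] [Fintype n] [Fintype l]

theorem ColStoch.mul {A : Matrix m n ℝ} {B : Matrix n l ℝ} (hA : ColStoch A) (hB : ColStoch B) :
    ColStoch (A * B) := by
  refine ⟨fun i j => Finset.sum_nonneg fun r _ => mul_nonneg (hA.1 i r) (hB.1 r j), fun j => ?_⟩
  simp only [Matrix.mul_apply]
  rw [Finset.sum_comm]
  simp only [← Finset.sum_mul, hA.2, one_mul, hB.2]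

theorem ColStoch.one [DecidableEq n] : ColStoch (1 : Matrix n n ℝ) :=
  ⟨fun i j => by by_cases h : i = j <;> simp [Matrix.one_apply, h],
    fun j => by simp [Matrix.one_apply]⟩

theorem ColStoch.norm_col_le_one {S : Matrix m n ℝ} (hS : ColStoch S) (j : n) :
    ‖toLp 2 (Sᵀ j)‖ ≤ 1 := by
  have hle : ∀ i, S i j ≤ 1 := fun i =>
    hS.2 j ▸ Finset.single_le_sum (fun r _ => hS.1 r j) (Finset.mem_univ i)
  rw [EuclideanSpace.norm_eq, Real.sqrt_le_one]
  simp only [Matrix.transpose_apply, Real.norm_eq_abs, sq_abs]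
  calc ∑ i, S i j ^ 2 ≤ ∑ i, S i j :=
        Finset.sum_le_sum fun i _ => by nlinarith [hS.1 i j, hle i]
    _ = 1 := hS.2 j

end ColStoch

section Frobenius

variable {m n : Type*} [Fintype m] [Fintype n]

attribute [local instance] Matrix.frobeniusNormedAddCommGroup in
theorem frob_eq_frobenius_norm (M : Matrix m n ℝ) : frob M = ‖M‖ := by
  rw [Matrix.frobenius_norm_def, frob, Real.sqrt_eq_rpow]
  simp

attribute [local instance] Matrix.frobeniusNormedAddCommGroup in
theorem frob_sub_le (M M' : Matrix m n ℝ) : frob (M - M') ≤ frob M + frob M' := by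
  simpa only [frob_eq_frobenius_norm] using norm_sub_le M M'

attribute [local instance] Matrix.frobeniusNormedAddCommGroup in
theorem frob_add_le (M M' : Matrix m n ℝ) : frob (M + M') ≤ frob M + frob M' := by
  simpa only [frob_eq_frobenius_norm] using norm_add_le M M'

theorem frob_sq_eq_sum_norm_col_sq (M : Matrix m n ℝ) :
    frob M ^ 2 = ∑ j, ‖toLp 2 (Mᵀ j)‖ ^ 2 := by
  rw [frob, Real.sq_sqrt (by positivity), Finset.sum_comm]
  simp [EuclideanSpace.norm_sq_eq]

theorem frob_le_sqrt_card_mul_of_norm_col_le (M : Matrix m n ℝ) {c : ℝ} (hc : 0 ≤ c)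
    (h : ∀ j, ‖toLp 2 (Mᵀ j)‖ ≤ c) : frob M ≤ √(Fintype.card n) * c := by
  refine le_of_pow_le_pow_left₀ two_ne_zero (by positivity) ?_
  calc frob M ^ 2 = ∑ j, ‖toLp 2 (Mᵀ j)‖ ^ 2 := frob_sq_eq_sum_norm_col_sq M
    _ ≤ ∑ _j : n, c ^ 2 := Finset.sum_le_sum fun j _ => pow_le_pow_left₀ (norm_nonneg _) (h j) 2
    _ = (√(Fintype.card n) * c) ^ 2 := by
        rw [mul_pow, Real.sq_sqrt (Nat.cast_nonneg _)]
        simp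

end Frobenius

section Spec

variable {d N n : ℕ}

theorem spec_nonneg (M : Matrix (Fin d) (Fin N) ℝ) : 0 ≤ spec M := norm_nonneg _

theorem spec_sub_comm (M M' : Matrix (Fin d) (Fin N) ℝ) : spec (M - M') = spec (M' - M) := by
  rw [spec, spec, ← neg_sub, map_neg, map_neg, norm_neg]

theorem norm_toEuclideanLin_le (M : Matrix (Fin d) (Fin N) ℝ) (v : EuclideanSpace ℝ (Fin N)) :
    ‖toEuclideanLin M v‖ ≤ spec M * ‖v‖ :=
  (LinearMap.toContinuousLinearMap (toEuclideanLin M)).le_opNorm v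

theorem frob_mul_le_sqrt_mul_spec (M : Matrix (Fin d) (Fin N) ℝ) {S : Matrix (Fin N) (Fin n) ℝ}
    (hS : ColStoch S) : frob (M * S) ≤ √n * spec M := by
  simpa using frob_le_sqrt_card_mul_of_norm_col_le (M * S) (spec_nonneg M) fun j =>
    calc ‖toLp 2 ((M * S)ᵀ j)‖ = ‖toEuclideanLin M (toLp 2 (Sᵀ j))‖ := rfl
      _ ≤ spec M * ‖toLp 2 (Sᵀ j)‖ := norm_toEuclideanLin_le M _
      _ ≤ spec M := mul_le_of_le_one_right (spec_nonneg M) (hS.norm_col_le_one j)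

theorem frob_le_sqrt_mul_spec (M : Matrix (Fin d) (Fin N) ℝ) : frob M ≤ √N * spec M := by
  simpa using frob_mul_le_sqrt_mul_spec M ColStoch.one

theorem frob_sub_mul_le (M M' : Matrix (Fin d) (Fin N) ℝ) {S : Matrix (Fin N) (Fin N) ℝ}
    (hS : ColStoch S) :
    frob (M - M * S) ≤ frob (M' - M' * S) + 2 * (√N * spec (M - M')) := by
  have hsplit : M - M * S = (M' - M' * S) + ((M - M') - (M - M') * S) := by
    rw [Matrix.sub_mul]
    abel
  calc frob (M - M * S) ≤ frob (M' - M' * S) + (frob (M - M') + frob ((M - M') * S)) := by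
        rw [hsplit]
        exact (frob_add_le _ _).trans (by gcongr; exact frob_sub_le _ _)
    _ ≤ _ := by linarith [frob_le_sqrt_mul_spec (M - M'), frob_mul_le_sqrt_mul_spec (M - M') hS]

theorem one_div_sqrt_mul_frob_sub_mul_le (M M' : Matrix (Fin d) (Fin N) ℝ)
    {S : Matrix (Fin N) (Fin N) ℝ} (hS : ColStoch S) :
    1 / √N * frob (M - M * S) ≤ 1 / √N * frob (M' - M' * S) + 2 * spec (M - M') := by
  -- only `≤`: for `N = 0` the factor `1 / √N` is `0`
  have hscale : 1 / √N * √N ≤ 1 := by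
    rw [one_div_mul_eq_div]
    exact div_self_le_one _
  have h := mul_le_mul_of_nonneg_left (frob_sub_mul_le M M' hS) (by positivity : 0 ≤ 1 / √N)
  nlinarith [spec_nonneg (M - M')]

end Spec

theorem le_opt {d N k : ℕ} {X : Matrix (Fin d) (Fin N) ℝ} {c : ℝ}
    (hne : ∃ A : Matrix (Fin N) (Fin k) ℝ, ∃ B : Matrix (Fin k) (Fin N) ℝ, ColStoch A ∧ ColStoch B)
    (h : ∀ (A : Matrix (Fin N) (Fin k) ℝ) (B : Matrix (Fin k) (Fin N) ℝ),
      ColStoch A → ColStoch B → c ≤ 1 / √N * frob (X - X * A * B)) :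
    c ≤ opt k X := by
  obtain ⟨A, B, hA, hB⟩ := hne
  refine le_csInf ⟨_, A, B, hA, hB, rfl⟩ ?_
  rintro _ ⟨A, B, hA, hB, rfl⟩
  exact h A B hA hB

theorem aa_approx_lowrank_general {d N k : ℕ} (p : ℕ) (ε : ℝ)
    (X Xtp : Matrix (Fin d) (Fin N) ℝ)
    (happrox : spec (X - Xtp) ≤ (1 + ε) * sigmaSucc p X)
    (At : Matrix (Fin N) (Fin k) ℝ) (Bt : Matrix (Fin k) (Fin N) ℝ)
    (hAt : ColStoch At) (hBt : ColStoch Bt)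
    (hmin : ∀ A : Matrix (Fin N) (Fin k) ℝ, ∀ B : Matrix (Fin k) (Fin N) ℝ,
      ColStoch A → ColStoch B →
      frob (Xtp - Xtp * At * Bt) ≤ frob (Xtp - Xtp * A * B)) :
    (1 / Real.sqrt N) * frob (X - X * At * Bt)
      ≤ opt k X + 4 * (1 + ε) * sigmaSucc p X := by
  have hX : 1 / √N * frob (X - X * At * Bt)
      ≤ 1 / √N * frob (Xtp - Xtp * At * Bt) + 2 * spec (X - Xtp) := by
    simpa only [Matrix.mul_assoc] using one_div_sqrt_mul_frob_sub_mul_le X Xtp (hAt.mul hBt)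
  have hXtp : 1 / √N * frob (Xtp - Xtp * At * Bt) - 2 * spec (X - Xtp) ≤ opt k X := by
    refine le_opt ⟨At, Bt, hAt, hBt⟩ fun A B hA hB => ?_
    have hAB := one_div_sqrt_mul_frob_sub_mul_le Xtp X (hA.mul hB)
    rw [spec_sub_comm, ← Matrix.mul_assoc, ← Matrix.mul_assoc] at hAB
    have := mul_le_mul_of_nonneg_left (hmin A B hA hB) (by positivity : 0 ≤ 1 / √N)
    linarith
  linarith

/-- Archetypal analysis applied to a `(1+ε)` rank-`p` approximation `X̃_p` of `X`
yields `(1/√N)‖X − XÃB̃‖_F ≤ opt(X) + 4(1+ε)σ_{p+1}(X)`. -/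
theorem aa_approx_lowrank {d N k : ℕ} (p : ℕ) (ε : ℝ) (hε : 0 < ε)
    (X Xtp : Matrix (Fin d) (Fin N) ℝ)
    (hrank : Xtp.rank ≤ p) (happrox : spec (X - Xtp) ≤ (1 + ε) * sigmaSucc p X)
    (At : Matrix (Fin N) (Fin k) ℝ) (Bt : Matrix (Fin k) (Fin N) ℝ)
    (hAt : ColStoch At) (hBt : ColStoch Bt)
    (hmin : ∀ A : Matrix (Fin N) (Fin k) ℝ, ∀ B : Matrix (Fin k) (Fin N) ℝ,
      ColStoch A → ColStoch B →
      frob (Xtp - Xtp * At * Bt) ≤ frob (Xtp - Xtp * A * B)) :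
    (1 / Real.sqrt N) * frob (X - X * At * Bt)
      ≤ opt k X + 4 * (1 + ε) * sigmaSucc p X :=
  aa_approx_lowrank_general p ε X Xtp happrox At Bt hAt hBt hmin
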